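/- arXiv:2011.00205 — 2 statements merged into one kernel-verified Lean document; each statement's English description precedes it below -/
import Mathlib

section
/- Let g : [ν₁, ν_M] → ℝ be convex, continuous, and piecewise affine with slope L_i on each (ν_i, ν_{i+1}), where L₁ ≤ … ≤ L_{M−1}. For 0 < γ < min_i (ν_{i+1} − ν_i), let g_γ be the C¹ underestimator obtained by integrating the derivative g'_γ, which equals L_{i−1} + ((L_i − L_{i−1})/γ)(w − ν_i) on [ν_i, ν_i + γ) for i = 2,…,M−1 and L_i on [ν_i + γ, ν_{i+1}), with g_γ(ν₁) = g(ν₁). Then sup_{u ∈ [ν₁,ν_M]} (g(u) − g_γ(u)) = (1/2)(L_{M−1} − L₁)γ and g_γ ≤ g everywhere on [ν₁, ν_M]. -/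
/-!
Write `D u = g u - g_γ u = ∫_{ν₁}^u (g' - g'_γ)`. On a segment `[ν_i, ν_{i+1}]` the integrand is
nonnegative and vanishes after the ramp, so `D` increases there by at most the area
`(L_i - L_{i-1}) γ / 2` of the triangle between the slope `L_i` and the ramp, and by exactly that
much over the whole segment. Telescoping gives `D ν_k = (L_{k-1} - L_1) γ / 2`, hence
`0 ≤ D ≤ (L_{M-1} - L_1) γ / 2`, with equality at `ν_M`.
-/

open MeasureTheory intervalIntegral Set

theorem integral_affine (a c m u : ℝ) :
    ∫ w in a..u, (c + m * (w - a)) = c * (u - a) + m / 2 * (u - a) ^ 2 := by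
  rw [integral_comp_sub_right (fun t => c + m * t), intervalIntegral.integral_add
    intervalIntegrable_const ((continuous_const_mul m).intervalIntegrable _ _),
    intervalIntegral.integral_const_mul]
  simp
  ring

theorem intervalIntegrable_of_eqOn_Ico {f h : ℝ → ℝ} {a b : ℝ} (hh : Continuous h)
    (hab : a ≤ b) (hfh : EqOn f h (Ico a b)) : IntervalIntegrable f volume a b :=
  (intervalIntegrable_congr_uIoo fun _ hw ↦ hfh (Ioo_subset_Ico_self (uIoo_of_le hab ▸ hw))).mpr
    (hh.intervalIntegrable a b)

def IsRampOn (f : ℝ → ℝ) (a b γ A B : ℝ) : Prop :=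
  (∀ w ∈ Ico a (a + γ), f w = A + (B - A) / γ * (w - a)) ∧ ∀ w ∈ Ico (a + γ) b, f w = B

namespace IsRampOn

variable {f : ℝ → ℝ} {a b γ A B u : ℝ}

theorem of_eqOn (hγ : 0 ≤ γ) (hγb : a + γ ≤ b) (hf : ∀ w ∈ Ico a b, f w = B) :
    IsRampOn f a b γ B B :=
  ⟨fun w hw ↦ by simp [hf w ⟨hw.1, hw.2.trans_le hγb⟩],
    fun w hw ↦ hf w ⟨by linarith [hw.1], hw.2⟩⟩

theorem intervalIntegrable (hf : IsRampOn f a b γ A B) (hγ : 0 ≤ γ) (hγb : a + γ ≤ b) :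
    IntervalIntegrable f volume a b :=
  (intervalIntegrable_of_eqOn_Ico (by fun_prop) (by linarith) hf.1).trans
    (intervalIntegrable_of_eqOn_Ico continuous_const hγb hf.2)

theorem integral_of_le (hf : IsRampOn f a b γ A B) (hu : u ∈ Icc a (a + γ)) :
    ∫ w in a..u, f w = A * (u - a) + (B - A) / γ / 2 * (u - a) ^ 2 := by
  rw [integral_congr_Ioo_of_le hu.1 fun w hw ↦ hf.1 w ⟨hw.1.le, hw.2.trans_le hu.2⟩,
    integral_affine]

theorem integral_of_ge (hf : IsRampOn f a b γ A B) (hγ : 0 < γ) (hu : u ∈ Icc (a + γ) b) :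
    ∫ w in a..u, f w = B * (u - a) - (B - A) * γ / 2 := by
  have hflat : ∫ w in a + γ..u, f w = B * (u - (a + γ)) := by
    rw [integral_congr_Ioo_of_le hu.1 fun w hw ↦ hf.2 w ⟨hw.1.le, hw.2.trans_le hu.2⟩]
    simp [mul_comm]
  rw [← integral_add_adjacent_intervals
      (intervalIntegrable_of_eqOn_Ico (by fun_prop) (by linarith) hf.1)
      (intervalIntegrable_of_eqOn_Ico continuous_const hu.1
        fun w hw ↦ hf.2 w ⟨hw.1, hw.2.trans_le hu.2⟩),
    hf.integral_of_le ⟨by linarith, le_rfl⟩, hflat]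
  field_simp
  ring

theorem deficit_mem_Icc (hf : IsRampOn f a b γ A B) (hγ : 0 < γ) (hAB : A ≤ B)
    (hu : u ∈ Icc a b) : B * (u - a) - ∫ w in a..u, f w ∈ Icc 0 ((B - A) * γ / 2) := by
  rcases le_total u (a + γ) with hu' | hu'
  · rw [hf.integral_of_le ⟨hu.1, hu'⟩]
    have hm : 0 ≤ (B - A) / γ := div_nonneg (by linarith) hγ.le
    have hmγ : (B - A) / γ * γ = B - A := div_mul_cancel₀ _ hγ.ne'
    have ht : 0 ≤ u - a := by linarith [hu.1]
    constructor
    · nlinarith [mul_nonneg (mul_nonneg hm ht) (by linarith : 0 ≤ 2 * γ - (u - a))]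
    · nlinarith [mul_nonneg hm (sq_nonneg (γ - (u - a)))]
  · rw [hf.integral_of_ge hγ ⟨hu', hu.2⟩]
    constructor <;> nlinarith

end IsRampOn

/-- For `i = 0` the truncated subtraction gives `s (0 - 1) = s 0`: the first segment has no ramp. -/
def IsSmoothedSlope (f : ℝ → ℝ) (x s : ℕ → ℝ) (γ : ℝ) (n : ℕ) : Prop :=
  ∀ i < n, IsRampOn f (x i) (x (i + 1)) γ (s (i - 1)) (s i)

def IsPiecewiseAffine (g : ℝ → ℝ) (x s : ℕ → ℝ) (n : ℕ) : Prop :=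
  ∀ i < n, ∀ u ∈ Icc (x i) (x (i + 1)), g u = g (x i) + s i * (u - x i)

section Piecewise

variable {f g : ℝ → ℝ} {x s : ℕ → ℝ} {γ : ℝ} {n : ℕ}

theorem IsSmoothedSlope.intervalIntegrable (hf : IsSmoothedSlope f x s γ n) (hγ : 0 ≤ γ)
    (hx : ∀ i < n, x i + γ ≤ x (i + 1)) :
    ∀ k ≤ n, IntervalIntegrable f volume (x 0) (x k)
  | 0, _ => .refl
  | k + 1, hk => (hf.intervalIntegrable hγ hx k (by omega)).trans
      ((hf k hk).intervalIntegrable hγ (hx k hk))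

theorem deficit_eq_add (hf : IsSmoothedSlope f x s γ n) (hg : IsPiecewiseAffine g x s n)
    (hγ : 0 ≤ γ) (hx : ∀ i < n, x i + γ ≤ x (i + 1)) {k : ℕ} (hk : k < n) {u : ℝ}
    (hu : u ∈ Icc (x k) (x (k + 1))) :
    g u - g (x 0) - ∫ w in x 0..u, f w =
      (g (x k) - g (x 0) - ∫ w in x 0..x k, f w) + (s k * (u - x k) - ∫ w in x k..u, f w) := by
  have hseg : IntervalIntegrable f volume (x k) u :=
    ((hf k hk).intervalIntegrable hγ (hx k hk)).mono_set
      (uIcc_subset_uIcc_left (Icc_subset_uIcc hu))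
  rw [← integral_add_adjacent_intervals (hf.intervalIntegrable hγ hx k hk.le) hseg,
    hg k hk u hu]
  ring

theorem deficit_at_knot (hf : IsSmoothedSlope f x s γ n) (hg : IsPiecewiseAffine g x s n)
    (hγ : 0 < γ) (hx : ∀ i < n, x i + γ ≤ x (i + 1)) :
    ∀ k ≤ n, g (x k) - g (x 0) - ∫ w in x 0..x k, f w = (s (k - 1) - s 0) * γ / 2
  | 0, _ => by simp
  | k + 1, hk => by
    rw [deficit_eq_add hf hg hγ.le hx hk ⟨(hx k hk).trans' (by linarith), le_rfl⟩,
      deficit_at_knot hf hg hγ hx k (by omega),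
      (hf k hk).integral_of_ge hγ ⟨hx k hk, le_rfl⟩]
    simp only [Nat.add_sub_cancel]
    ring

theorem deficit_mem_Icc (hf : IsSmoothedSlope f x s γ n) (hg : IsPiecewiseAffine g x s n)
    (hs : Monotone s) (hγ : 0 < γ) (hx : ∀ i < n, x i + γ ≤ x (i + 1)) :
    ∀ k ≤ n, ∀ u ∈ Icc (x 0) (x k),
      g u - g (x 0) - ∫ w in x 0..u, f w ∈ Icc 0 ((s (k - 1) - s 0) * γ / 2)
  | 0, _, u, hu => by
    obtain rfl : u = x 0 := le_antisymm hu.2 hu.1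
    simp
  | k + 1, hk, u, hu => by
    have hsk : s (k - 1) ≤ s k := hs (by omega)
    simp only [Nat.add_sub_cancel]
    rcases le_or_gt u (x k) with hu' | hu'
    · obtain ⟨h0, h1⟩ := deficit_mem_Icc hf hg hs hγ hx k (by omega) u ⟨hu.1, hu'⟩
      exact ⟨h0, h1.trans (by gcongr)⟩
    · have hseg : u ∈ Icc (x k) (x (k + 1)) := ⟨hu'.le, hu.2⟩
      obtain ⟨h0, h1⟩ := (hf k hk).deficit_mem_Icc hγ hsk hseg
      rw [deficit_eq_add hf hg hγ.le hx hk hseg, deficit_at_knot hf hg hγ hx k (by omega)]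
      have hs0 : s 0 ≤ s (k - 1) := hs (Nat.zero_le _)
      constructor <;> nlinarith

theorem isGreatest_deficit (hf : IsSmoothedSlope f x s γ n) (hg : IsPiecewiseAffine g x s n)
    (hs : Monotone s) (hγ : 0 < γ) (hx : ∀ i < n, x i + γ ≤ x (i + 1)) (hxn : x 0 ≤ x n) :
    IsGreatest ((fun u ↦ g u - g (x 0) - ∫ w in x 0..u, f w) '' Icc (x 0) (x n))
      ((s (n - 1) - s 0) * γ / 2) :=
  ⟨⟨x n, ⟨hxn, le_rfl⟩, deficit_at_knot hf hg hγ hx n le_rfl⟩,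
    by rintro _ ⟨u, hu, rfl⟩; exact (deficit_mem_Icc hf hg hs hγ hx n le_rfl u hu).2⟩

end Piecewise

theorem stmt_14 (n : ℕ) (hn : 0 < n) (ν : Fin (n + 1) → ℝ)
    (hν : StrictMono ν) (L : Fin n → ℝ) (hL : Monotone L)
    (g : ℝ → ℝ)
    (hgaff : ∀ i : Fin n, ∀ u ∈ Set.Icc (ν i.castSucc) (ν i.succ),
      g u = g (ν i.castSucc) + L i * (u - ν i.castSucc))
    (γ : ℝ) (hγ0 : 0 < γ)
    (hγ : ∀ i : Fin n, γ < ν i.succ - ν i.castSucc)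
    (gd : ℝ → ℝ)
    (hgd0 : ∀ w ∈ Set.Ico (ν 0) (ν ⟨1, by omega⟩), gd w = L ⟨0, hn⟩)
    (hgdmid : ∀ (i : ℕ) (h : i + 1 < n),
      (∀ w ∈ Set.Ico (ν ⟨i + 1, by omega⟩) (ν ⟨i + 1, by omega⟩ + γ),
        gd w = L ⟨i, by omega⟩
          + (L ⟨i + 1, h⟩ - L ⟨i, by omega⟩) / γ * (w - ν ⟨i + 1, by omega⟩)) ∧
      (∀ w ∈ Set.Ico (ν ⟨i + 1, by omega⟩ + γ) (ν ⟨i + 2, by omega⟩),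
        gd w = L ⟨i + 1, h⟩))
    (gγ : ℝ → ℝ)
    (hgγ : ∀ u : ℝ, gγ u = g (ν 0) + ∫ w in (ν 0)..u, gd w) :
    (∀ u ∈ Set.Icc (ν 0) (ν (Fin.last n)), gγ u ≤ g u) ∧
    sSup ((fun u => g u - gγ u) '' Set.Icc (ν 0) (ν (Fin.last n)))
      = 1 / 2 * (L ⟨n - 1, by omega⟩ - L ⟨0, hn⟩) * γ := by
  set x : ℕ → ℝ := fun k ↦ ν ⟨min k n, by omega⟩ with hx_def
  set s : ℕ → ℝ := fun k ↦ L ⟨min k (n - 1), by omega⟩ with hs_def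
  have hxk (k : ℕ) (hk : k ≤ n) : x k = ν ⟨k, by omega⟩ := by simp [hx_def, hk]
  have hsk (k : ℕ) (hk : k < n) : s k = L ⟨k, hk⟩ := by
    simp [hs_def, show k ≤ n - 1 by omega]
  have hx0 : ν 0 = x 0 := by simp [hx_def]
  have hxn : ν (Fin.last n) = x n := by simp [hx_def, Fin.last]
  have hs : Monotone s := fun a b hab ↦ hL (by simp only [Fin.mk_le_mk]; omega)
  have hx (i : ℕ) (hi : i < n) : x i + γ ≤ x (i + 1) := by
    rw [hxk i hi.le, hxk (i + 1) hi]; exact (lt_sub_iff_add_lt'.mp (hγ ⟨i, hi⟩)).le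
  have hg : IsPiecewiseAffine g x s n := fun i hi ↦ by
    rw [hxk i hi.le, hxk (i + 1) hi, hsk i hi]; exact hgaff ⟨i, hi⟩
  have hf : IsSmoothedSlope gd x s γ n := by
    rintro (_ | j) hj
    · exact .of_eqOn hγ0.le (hx 0 hn) (by rwa [← hx0, hxk 1 hn, hsk 0 hn])
    · rw [hxk (j + 1) hj.le, hxk (j + 2) hj, Nat.add_sub_cancel, hsk j (by omega),
        hsk (j + 1) hj]
      exact hgdmid j hj
  rw [hx0] at hgγ
  have hdef : (fun u ↦ g u - gγ u) = fun u ↦ g u - g (x 0) - ∫ w in x 0..u, gd w :=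
    funext fun u ↦ by rw [hgγ]; ring
  have hvalue :
      1 / 2 * (L ⟨n - 1, by omega⟩ - L ⟨0, hn⟩) * γ = (s (n - 1) - s 0) * γ / 2 := by
    rw [hsk 0 hn, hsk (n - 1) (by omega)]; ring
  rw [hx0, hxn, hdef, hvalue]
  refine ⟨fun u hu ↦ ?_, (isGreatest_deficit hf hg hs hγ0 hx ?_).csSup_eq⟩
  · linarith [hgγ u, (deficit_mem_Icc hf hg hs hγ0 hx n le_rfl u hu).1]
  · exact hx0 ▸ hxn ▸ hν.monotone (Fin.zero_le _)
end

section
/- Let g : ℝᵐ → ℝ be convex and continuous, let Ω be a finite measure space, and let (vⁿ)_n ⊂ L^∞(Ω, ℝᵐ) be uniformly bounded with vⁿ ⇀* v weakly-* in L^∞(Ω, ℝᵐ). Then ∫_Ω g(v(x)) dx ≤ liminf_n ∫_Ω g(vⁿ(x)) dx. -/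
/-!
Approximate `w` by simple functions `sₖ` with values in a fixed ball. At each of the finitely
many values `q` of `sₖ` pick a subgradient `b q` of `g`; then `z ↦ g (sₖ x) + b (sₖ x) (z - sₖ x)`
is an affine minorant of `g` whose linear part `x ↦ b (sₖ x)` is an integrable test function
(simple functions sidestep any measurable selection of subgradients). Integrating the minorant
along `vⁿ` and letting `n → ∞` bounds `liminf ∫ g (vⁿ)` from below by
`∫ g (sₖ) + b (sₖ) (w - sₖ)`. Subgradients at points of a ball are uniformly bounded because `g`
is bounded on a larger ball, so these lower bounds tend to `∫ g (w)` by dominated convergence.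
-/

open MeasureTheory Filter Topology Metric Set

section Subgradient

variable {E : Type*} [NormedAddCommGroup E] [NormedSpace ℝ E] {g : E → ℝ} {b : StrongDual ℝ E}
  {q : E}

def HasSubgradientAt (g : E → ℝ) (b : StrongDual ℝ E) (q : E) : Prop :=
  ∀ y, g q + b (y - q) ≤ g y

theorem ConvexOn.exists_hasSubgradientAt (hgconv : ConvexOn ℝ univ g) (hgcont : Continuous g)
    (q : E) : ∃ b, HasSubgradientAt g b q := by
  set S := {p : E × ℝ | g p.1 < p.2}
  have hSconv : Convex ℝ S := by simpa using hgconv.convex_strict_epigraph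
  have hSopen : IsOpen S := isOpen_lt (hgcont.comp continuous_fst) continuous_snd
  obtain ⟨f, hf⟩ := geometric_hahn_banach_open_point hSconv hSopen (by simp [S] : (q, g q) ∉ S)
  have hsplit : ∀ y t, f (y, t) = f (y, 0) + t * f (0, 1) := fun y t => by
    rw [← smul_eq_mul, ← map_smul, ← map_add]; simp
  -- `(y, t) ∈ S` for every `t > g y`; let `t ↓ g y`.
  have hgraph : ∀ y, f (y, g y) ≤ f (q, g q) := fun y =>
    le_of_tendsto ((by fun_prop : Continuous fun t => f (y, t)).continuousWithinAt
      (s := Ioi (g y)) (x := g y)) (eventually_nhdsWithin_of_forall fun t ht => (hf (y, t) ht).le)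
  have hvert : f (0, 1) < 0 := by
    have := hf (q, g q + 1) (by simp [S])
    rw [hsplit, hsplit q (g q)] at this
    linarith
  refine ⟨(-f (0, 1))⁻¹ • f.comp (ContinuousLinearMap.inl ℝ E ℝ), fun y => ?_⟩
  have hy := hgraph y
  rw [hsplit y, hsplit q] at hy
  have hinl : ∀ z, f (z, 0) = f.comp (ContinuousLinearMap.inl ℝ E ℝ) z := fun z => rfl
  rw [smul_apply, map_sub, smul_eq_mul, ← hinl, ← hinl, inv_mul_eq_div]
  have : (f (y, 0) - f (q, 0)) / -f (0, 1) ≤ g y - g q := by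
    rw [div_le_iff₀ (by linarith)]; linarith
  linarith

theorem HasSubgradientAt.norm_le {r M : ℝ} (hb : HasSubgradientAt g b q) (hr : 0 < r)
    (hM : ∀ y ∈ closedBall q r, |g y| ≤ M) : ‖b‖ ≤ 2 * M / r := by
  have hM0 : 0 ≤ M := (abs_nonneg _).trans (hM q (mem_closedBall_self hr.le))
  refine b.opNorm_le_of_unit_norm (by positivity) fun x hx => ?_
  have hbound : ∀ z : E, ‖z‖ = 1 → r * b z ≤ 2 * M := fun z hz => by
    have hmem : q + r • z ∈ closedBall q r := by simp [norm_smul, hz, abs_of_pos hr]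
    have := hb (q + r • z)
    rw [add_sub_cancel_left, map_smul, smul_eq_mul] at this
    linarith [abs_le.mp (hM _ hmem), abs_le.mp (hM q (mem_closedBall_self hr.le))]
  have h₁ := hbound x hx
  have h₂ := hbound (-x) (by rw [norm_neg, hx])
  rw [map_neg] at h₂
  rw [Real.norm_eq_abs, le_div_iff₀ hr, ← abs_of_pos hr, ← abs_mul, mul_comm]
  exact abs_le.mpr ⟨by linarith, h₁⟩

end Subgradient

theorem le_liminf_of_tendsto_of_le {a b : ℕ → ℝ} {L : ℝ} (ha : Tendsto a atTop (𝓝 L))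
    (hab : ∀ n, a n ≤ b n) (hb : IsBoundedUnder (· ≤ ·) atTop b) : L ≤ liminf b atTop := by
  rw [← ha.liminf_eq]
  exact liminf_le_liminf (.of_forall hab) ha.isBoundedUnder_ge hb.isCoboundedUnder_flip

section WeakStar

variable {Ω : Type*} [MeasurableSpace Ω]

/-- Weak-* convergence in `L^∞(μ; E)`, viewed as the dual of `L¹(μ; E*)`. -/
def WeakStarTendsto {E : Type*} [NormedAddCommGroup E] [NormedSpace ℝ E] (μ : Measure Ω)
    (v : ℕ → Ω → E) (w : Ω → E) : Prop :=
  ∀ φ : Ω → StrongDual ℝ E, Integrable φ μ →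
    Tendsto (fun n => ∫ x, φ x (v n x) ∂μ) atTop (𝓝 (∫ x, φ x (w x) ∂μ))

theorem weakStarTendsto_of_tendsto_integral_sum_mul {μ : Measure Ω} {m : ℕ}
    {v : ℕ → Ω → (Fin m → ℝ)} {w : Ω → (Fin m → ℝ)}
    (hconv : ∀ φ : Ω → (Fin m → ℝ), Integrable φ μ →
      Tendsto (fun n => ∫ x, ∑ j, v n x j * φ x j ∂μ) atTop
        (𝓝 (∫ x, ∑ j, w x j * φ x j ∂μ))) :
    WeakStarTendsto μ v w := by
  intro ψ hψ
  let L : StrongDual ℝ (Fin m → ℝ) →L[ℝ] (Fin m → ℝ) :=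
    ContinuousLinearMap.pi fun j => ContinuousLinearMap.apply ℝ ℝ (Pi.single j 1)
  have hsum : ∀ (b : StrongDual ℝ (Fin m → ℝ)) z, b z = ∑ j, z j * L b j := fun b z => by
    conv_lhs => rw [← Finset.univ_sum_single z, map_sum]
    refine Finset.sum_congr rfl fun j _ => ?_
    rw [show Pi.single j (z j) = z j • Pi.single j (1 : ℝ) by
      rw [← Pi.single_smul', smul_eq_mul, mul_one], map_smul, smul_eq_mul]
    rfl
  convert hconv _ (L.integrable_comp hψ) using 4 <;> exact hsum _ _

end WeakStar

section LowerSemicontinuity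

variable {Ω E : Type*} [MeasurableSpace Ω] {μ : Measure Ω} [IsFiniteMeasure μ]
  [NormedAddCommGroup E] [NormedSpace ℝ E] {g : E → ℝ} {v : ℕ → Ω → E} {w : Ω → E}

theorem integral_add_apply_le_liminf_integral (hconv : WeakStarTendsto μ v w)
    (hvi : ∀ n, Integrable (v n) μ) (hwi : Integrable w μ)
    (hgv : ∀ n, Integrable (fun x => g (v n x)) μ)
    (hgb : IsBoundedUnder (· ≤ ·) atTop fun n => ∫ x, g (v n x) ∂μ)
    {c : Ω → ℝ} {ψ : Ω → StrongDual ℝ E} {K : ℝ} (hc : Integrable c μ)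
    (hψ : AEStronglyMeasurable ψ μ) (hψK : ∀ᵐ x ∂μ, ‖ψ x‖ ≤ K)
    (hmin : ∀ x z, c x + ψ x z ≤ g z) :
    ∫ x, c x + ψ x (w x) ∂μ ≤ liminf (fun n => ∫ x, g (v n x) ∂μ) atTop := by
  have hψu : ∀ {u : Ω → E}, Integrable u μ → Integrable (fun x => ψ x (u x)) μ := fun hu =>
    (ContinuousLinearMap.id ℝ (StrongDual ℝ E)).integrable_of_bilin_of_bdd_left K hψ hψK hu
  have hlim : Tendsto (fun n => ∫ x, c x + ψ x (v n x) ∂μ) atTop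
      (𝓝 (∫ x, c x + ψ x (w x) ∂μ)) := by
    simp only [integral_add hc (hψu (hvi _)), integral_add hc (hψu hwi)]
    exact tendsto_const_nhds.add (hconv ψ (.of_bound hψ K hψK))
  exact le_liminf_of_tendsto_of_le hlim
    (fun n => integral_mono (hc.add (hψu (hvi n))) (hgv n) fun x => hmin x _) hgb

theorem integral_add_apply_sub_le_liminf_integral (hconv : WeakStarTendsto μ v w)
    (hvi : ∀ n, Integrable (v n) μ) (hwi : Integrable w μ)
    (hgv : ∀ n, Integrable (fun x => g (v n x)) μ)
    (hgb : IsBoundedUnder (· ≤ ·) atTop fun n => ∫ x, g (v n x) ∂μ)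
    {b : E → StrongDual ℝ E} (hb : ∀ q, HasSubgradientAt g (b q) q) (s : SimpleFunc Ω E) :
    ∫ x, g (s x) + b (s x) (w x - s x) ∂μ ≤ liminf (fun n => ∫ x, g (v n x) ∂μ) atTop := by
  obtain ⟨K, hK⟩ := (s.map b).exists_forall_norm_le
  have := integral_add_apply_le_liminf_integral hconv hvi hwi hgv hgb
    (s.map fun q => g q - b q q).integrable_of_isFiniteMeasure
    (s.map b).stronglyMeasurable.aestronglyMeasurable (.of_forall hK) fun x z => by
      simpa [map_sub, add_sub, sub_add_eq_add_sub] using hb (s x) z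
  convert this using 3 with x
  simp [map_sub]
  ring

theorem tendsto_integral_add_apply_sub [ProperSpace E] (hg : Continuous g) {s : ℕ → Ω → E}
    {ψ : ℕ → Ω → StrongDual ℝ E} {R K : ℝ} (hs : ∀ k, AEStronglyMeasurable (s k) μ)
    (hψ : ∀ k, AEStronglyMeasurable (ψ k) μ) (hsR : ∀ k x, ‖s k x‖ ≤ R)
    (hψK : ∀ k x, ‖ψ k x‖ ≤ K) (hw : AEStronglyMeasurable w μ) (hwR : ∀ᵐ x ∂μ, ‖w x‖ ≤ R)
    (hsw : ∀ᵐ x ∂μ, Tendsto (fun k => s k x) atTop (𝓝 (w x))) :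
    Tendsto (fun k => ∫ x, g (s k x) + ψ k x (w x - s k x) ∂μ) atTop (𝓝 (∫ x, g (w x) ∂μ)) := by
  obtain ⟨M, hM⟩ := (isCompact_closedBall (0 : E) R).exists_bound_of_continuousOn
    hg.continuousOn
  have hψ_apply : ∀ k x, ‖ψ k x (w x - s k x)‖ ≤ K * ‖w x - s k x‖ := fun k x =>
    (ψ k x).le_of_opNorm_le (hψK k x) _
  refine tendsto_integral_of_dominated_convergence (fun _ => M + K * (R + R))
    (fun k => (hg.comp_aestronglyMeasurable (hs k)).add
      ((ContinuousLinearMap.id ℝ (StrongDual ℝ E)).aestronglyMeasurable_comp₂ (hψ k)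
        (hw.sub (hs k))))
    (integrable_const _) (fun k => hwR.mono fun x hx => ?_) (hsw.mono fun x hx => ?_)
  · have hK : 0 ≤ K := (norm_nonneg _).trans (hψK k x)
    calc ‖g (s k x) + ψ k x (w x - s k x)‖
        ≤ ‖g (s k x)‖ + K * ‖w x - s k x‖ := norm_add_le_of_le le_rfl (hψ_apply k x)
      _ ≤ M + K * (R + R) := by
        gcongr
        · exact hM _ (mem_closedBall_zero_iff.mpr (hsR k x))
        · exact norm_sub_le_of_le hx (hsR k x)
  · have hsub : Tendsto (fun k => ψ k x (w x - s k x)) atTop (𝓝 0) := by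
      refine squeeze_zero_norm (fun k => hψ_apply k x) ?_
      simpa using ((tendsto_iff_norm_sub_tendsto_zero.mp hx).const_mul K).congr
        fun k => by rw [norm_sub_rev]
    simpa using (hg.continuousAt.tendsto.comp hx).add hsub

theorem ConvexOn.integral_le_liminf_integral_of_weakStarTendsto [ProperSpace E]
    [MeasurableSpace E] [BorelSpace E] (hgconv : ConvexOn ℝ univ g) (hgcont : Continuous g)
    (hv : ∀ n, AEStronglyMeasurable (v n) μ) (hw : Measurable w) {C : ℝ}
    (hvC : ∀ n, ∀ᵐ x ∂μ, ‖v n x‖ ≤ C) (hwC : ∀ᵐ x ∂μ, ‖w x‖ ≤ C)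
    (hconv : WeakStarTendsto μ v w) :
    ∫ x, g (w x) ∂μ ≤ liminf (fun n => ∫ x, g (v n x) ∂μ) atTop := by
  set R := max C 0
  have hCR : C ≤ R := le_max_left C 0
  obtain ⟨M, hM⟩ := (isCompact_closedBall (0 : E) (R + 1)).exists_bound_of_continuousOn
    hgcont.continuousOn
  have hgvM : ∀ n, ∀ᵐ x ∂μ, ‖g (v n x)‖ ≤ M := fun n => (hvC n).mono fun x hx =>
    hM _ (mem_closedBall_zero_iff.mpr (by linarith))
  choose b hb using hgconv.exists_hasSubgradientAt hgcont
  have hbM : ∀ q ∈ closedBall (0 : E) R, ‖b q‖ ≤ 2 * M := fun q hq => by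
    simpa using (hb q).norm_le one_pos fun y hy =>
      hM y (closedBall_subset_closedBall' (by simpa [add_comm] using hq) hy)
  have h0R : (0 : E) ∈ closedBall 0 R := mem_closedBall_self (le_max_right C 0)
  let s := SimpleFunc.approxOn w hw (closedBall (0 : E) R) 0 h0R
  have hsR : ∀ k x, s k x ∈ closedBall (0 : E) R := SimpleFunc.approxOn_mem hw h0R
  have hsw : ∀ᵐ x ∂μ, Tendsto (fun k => s k x) atTop (𝓝 (w x)) := hwC.mono fun x hx =>
    SimpleFunc.tendsto_approxOn hw h0R (subset_closure (mem_closedBall_zero_iff.mpr (hx.trans hCR)))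
  have hlow := integral_add_apply_sub_le_liminf_integral hconv
    (fun n => .of_bound (hv n) C (hvC n)) (.of_bound hw.aestronglyMeasurable C hwC)
    (fun n => .of_bound (hgcont.comp_aestronglyMeasurable (hv n)) M (hgvM n))
    ⟨M * μ.real univ, eventually_map.mpr (.of_forall fun n =>
      (le_abs_self _).trans (norm_integral_le_of_norm_le_const (hgvM n)))⟩ hb
  exact le_of_tendsto' (tendsto_integral_add_apply_sub hgcont (ψ := fun k x => b (s k x))
    (fun k => (s k).stronglyMeasurable.aestronglyMeasurable)
    (fun k => ((s k).map b).stronglyMeasurable.aestronglyMeasurable)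
    (fun k x => mem_closedBall_zero_iff.mp (hsR k x)) (fun k x => hbM _ (hsR k x))
    hw.aestronglyMeasurable (hwC.mono fun x hx => hx.trans hCR) hsw) fun k => hlow (s k)

end LowerSemicontinuity

theorem stmt_19 (m : ℕ) (Ω : Type*) [MeasurableSpace Ω] (μ : Measure Ω)
    [IsFiniteMeasure μ] (g : (Fin m → ℝ) → ℝ)
    (hgconv : ConvexOn ℝ Set.univ g) (hgcont : Continuous g)
    (v : ℕ → Ω → (Fin m → ℝ)) (w : Ω → (Fin m → ℝ))
    (hvm : ∀ n, Measurable (v n)) (hwm : Measurable w)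
    (C : ℝ) (hvb : ∀ n, ∀ᵐ x ∂μ, ‖v n x‖ ≤ C) (hwb : ∀ᵐ x ∂μ, ‖w x‖ ≤ C)
    (hconv : ∀ φ : Ω → (Fin m → ℝ), Integrable φ μ →
      Filter.Tendsto (fun n => ∫ x, ∑ j, v n x j * φ x j ∂μ) Filter.atTop
        (nhds (∫ x, ∑ j, w x j * φ x j ∂μ))) :
    (∫ x, g (w x) ∂μ)
      ≤ Filter.liminf (fun n => ∫ x, g (v n x) ∂μ) Filter.atTop :=
  hgconv.integral_le_liminf_integral_of_weakStarTendsto hgcont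
    (fun n => (hvm n).aestronglyMeasurable) hwm hvb hwb
    (weakStarTendsto_of_tendsto_integral_sum_mul hconv)
end
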